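/- arXiv:math/0703051 — 7 statements merged into one kernel-verified Lean document; each statement's English description precedes it below -/
import Mathlib

section
/- Let p be a prime number and r a positive even integer, and let R = Z/p^r. Then χ(Γ₀(R)) = ω(Γ₀(R)) = p^{r/2}. -/
/-- Beck's zero-divisor graph `Γ₀(R)`: vertices are all elements of `R`, and two
distinct vertices `x`, `y` are adjacent iff `x * y = 0`. -/
def gammaZero (R : Type*) [CommRing R] : SimpleGraph R where
  Adj x y := x ≠ y ∧ x * y = 0
  symm := ⟨fun x y ⟨h1, h2⟩ => ⟨h1.symm, by rwa [mul_comm]⟩⟩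
  loopless := ⟨fun x ⟨h1, _⟩ => h1 rfl⟩

/-- The clique number of a graph, as an extended natural number: the least upper
bound of the sizes of (finite) cliques in `G`. -/
noncomputable def cliqueNumE {V : Type*} (G : SimpleGraph V) : ℕ∞ :=
  ⨆ (s : Finset V) (_ : G.IsClique (s : Set V)), (s.card : ℕ∞)

/-!
Write `p ^ r = q * q` with `q = p ^ (r / 2)` and let `I = q R`, which is also the annihilator
of `q` in `R = ZMod (q * q)`. Since `I * I = 0`, the `q` elements of `I` form a clique.
Conversely, if `x * y = 0` then `q * q ∣ x * y` forces `q ∣ x` or `q ∣ y`, so every edge meets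
`I` and `R \ I` is independent. Colouring each element of `I` by itself and all of `R \ I` with
the colour of `q` (which has no neighbour outside its annihilator `I`) is therefore proper, so
`χ ≤ |I| ≤ ω ≤ χ`.
-/

namespace SimpleGraph

variable {V : Type*} {G : SimpleGraph V}

theorem cliqueNumE_le_chromaticNumber : cliqueNumE G ≤ G.chromaticNumber :=
  iSup₂_le fun _ hs => by exact_mod_cast hs.card_le_chromaticNumber

theorem IsClique.card_le_cliqueNumE {s : Finset V} (hs : G.IsClique (s : Set V)) :
    (s.card : ℕ∞) ≤ cliqueNumE G :=
  le_iSup₂_of_le s hs le_rfl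

theorem colorable_card_of_forall_adj_mem (s : Finset V) {c : V} (hc : c ∈ s)
    (hcover : ∀ x y, G.Adj x y → x ∈ s ∨ y ∈ s) (hcs : ∀ y ∉ s, ¬G.Adj c y) :
    G.Colorable s.card := by
  classical
  let color : G.Coloring s := Coloring.mk (fun x => if hx : x ∈ s then ⟨x, hx⟩ else ⟨c, hc⟩) <| by
    intro x y hxy hcol
    by_cases hx : x ∈ s <;> by_cases hy : y ∈ s <;>
      simp only [hx, hy, dite_true, dite_false, Subtype.mk.injEq] at hcol
    · exact G.irrefl (hcol ▸ hxy)
    · exact hcs y hy (hcol ▸ hxy)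
    · exact hcs x hx (hcol ▸ hxy.symm)
    · exact (hcover x y hxy).elim hx hy
  simpa using color.colorable

theorem chromaticNumber_eq_card_and_cliqueNumE_eq_card (s : Finset V)
    (hs : G.IsClique (s : Set V)) {c : V} (hc : c ∈ s)
    (hcover : ∀ x y, G.Adj x y → x ∈ s ∨ y ∈ s) (hcs : ∀ y ∉ s, ¬G.Adj c y) :
    G.chromaticNumber = s.card ∧ cliqueNumE G = s.card := by
  have hχ : G.chromaticNumber ≤ s.card :=
    (colorable_card_of_forall_adj_mem s hc hcover hcs).chromaticNumber_le
  have hω := hs.card_le_cliqueNumE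
  have hωχ : cliqueNumE G ≤ G.chromaticNumber := cliqueNumE_le_chromaticNumber
  exact ⟨le_antisymm hχ (hω.trans hωχ), le_antisymm (hωχ.trans hχ) hω⟩

end SimpleGraph

theorem Nat.Prime.pow_dvd_or_pow_dvd_of_pow_add_dvd_mul {p i j a b : ℕ} (hp : p.Prime)
    (h : p ^ (i + j) ∣ a * b) : p ^ i ∣ a ∨ p ^ j ∣ b := by
  rcases eq_or_ne a 0 with rfl | ha
  · simp
  rcases eq_or_ne b 0 with rfl | hb
  · simp
  simp only [hp.pow_dvd_iff_le_factorization ha, hp.pow_dvd_iff_le_factorization hb,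
    hp.pow_dvd_iff_le_factorization (mul_ne_zero ha hb), Nat.factorization_mul ha hb,
    Finsupp.add_apply] at h ⊢
  omega

namespace ZMod

variable {q : ℕ}

def multiplesFinset (q : ℕ) : Finset (ZMod (q * q)) :=
  (Finset.range q).image fun a => ((a * q : ℕ) : ZMod (q * q))

theorem natCast_mul_eq_zero_iff [NeZero q] (a : ℕ) : (a : ZMod (q * q)) * q = 0 ↔ q ∣ a := by
  rw [← Nat.cast_mul, natCast_eq_zero_iff, mul_comm a, Nat.mul_dvd_mul_iff_left (NeZero.pos q)]

theorem mem_multiplesFinset_iff [NeZero q] (x : ZMod (q * q)) :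
    x ∈ multiplesFinset q ↔ x * q = 0 := by
  constructor
  · intro hx
    obtain ⟨a, -, rfl⟩ := Finset.mem_image.mp hx
    exact (natCast_mul_eq_zero_iff _).mpr (dvd_mul_left q a)
  · intro hx
    rw [← natCast_zmod_val x, natCast_mul_eq_zero_iff] at hx
    obtain ⟨b, hb⟩ := hx
    have hbq : b < q := Nat.lt_of_mul_lt_mul_left (hb ▸ x.val_lt)
    refine Finset.mem_image.mpr ⟨b, Finset.mem_range.mpr hbq, ?_⟩
    rw [mul_comm b q, ← hb, natCast_zmod_val]

theorem card_multiplesFinset (q : ℕ) : (multiplesFinset q).card = q := by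
  rw [multiplesFinset, Finset.card_image_of_injOn, Finset.card_range]
  intro a ha b hb hab
  simp only [Finset.coe_range, Set.mem_Iio] at ha hb
  have hq : 0 < q := by omega
  rw [natCast_eq_natCast_iff', Nat.mod_eq_of_lt (Nat.mul_lt_mul_of_pos_right ha hq),
    Nat.mod_eq_of_lt (Nat.mul_lt_mul_of_pos_right hb hq)] at hab
  exact Nat.eq_of_mul_eq_mul_right hq hab

theorem isClique_multiplesFinset [NeZero q] :
    (gammaZero (ZMod (q * q))).IsClique (multiplesFinset q : Set (ZMod (q * q))) := by
  intro x hx y hy hxy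
  obtain ⟨b, -, rfl⟩ := Finset.mem_image.mp hy
  refine ⟨hxy, ?_⟩
  rw [Nat.cast_mul, mul_left_comm, (mem_multiplesFinset_iff x).mp hx, mul_zero]

theorem natCast_mem_multiplesFinset [NeZero q] : (q : ZMod (q * q)) ∈ multiplesFinset q := by
  rw [mem_multiplesFinset_iff, ← Nat.cast_mul, natCast_self]

theorem mem_multiplesFinset_or_mem_of_mul_eq_zero {p k : ℕ} (hp : p.Prime)
    {x y : ZMod (p ^ k * p ^ k)} (h : x * y = 0) :
    x ∈ multiplesFinset (p ^ k) ∨ y ∈ multiplesFinset (p ^ k) := by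
  have : NeZero (p ^ k) := ⟨pow_ne_zero k hp.ne_zero⟩
  rw [← natCast_zmod_val x, ← natCast_zmod_val y, ← Nat.cast_mul, natCast_eq_zero_iff] at h
  rw [mem_multiplesFinset_iff, mem_multiplesFinset_iff, ← natCast_zmod_val x,
    ← natCast_zmod_val y, natCast_mul_eq_zero_iff, natCast_mul_eq_zero_iff]
  exact hp.pow_dvd_or_pow_dvd_of_pow_add_dvd_mul <| by rwa [pow_add]

end ZMod

theorem stmt0_general (p r : ℕ) (hp : p.Prime) (hre : Even r) :
    (gammaZero (ZMod (p ^ r))).chromaticNumber = cliqueNumE (gammaZero (ZMod (p ^ r))) ∧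
    cliqueNumE (gammaZero (ZMod (p ^ r))) = ((p ^ (r / 2) : ℕ) : ℕ∞) := by
  obtain ⟨k, rfl⟩ := hre
  have : NeZero (p ^ k) := ⟨pow_ne_zero k hp.ne_zero⟩
  rw [show (k + k) / 2 = k by omega, pow_add]
  obtain ⟨hχ, hω⟩ := SimpleGraph.chromaticNumber_eq_card_and_cliqueNumE_eq_card
    (ZMod.multiplesFinset (p ^ k)) ZMod.isClique_multiplesFinset
    ZMod.natCast_mem_multiplesFinset
    (fun _ _ hxy => ZMod.mem_multiplesFinset_or_mem_of_mul_eq_zero hp hxy.2)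
    (fun y hy hadj => hy <| (ZMod.mem_multiplesFinset_iff y).mpr <| mul_comm y _ ▸ hadj.2)
  rw [ZMod.card_multiplesFinset] at hχ hω
  exact ⟨hχ.trans hω.symm, hω⟩

theorem stmt0 (p r : ℕ) (hp : p.Prime) (hr : 0 < r) (hre : Even r) :
    (gammaZero (ZMod (p ^ r))).chromaticNumber = cliqueNumE (gammaZero (ZMod (p ^ r))) ∧
    cliqueNumE (gammaZero (ZMod (p ^ r))) = ((p ^ (r / 2) : ℕ) : ℕ∞) :=
  stmt0_general p r hp hre
end

section
/- Let p be a prime number and r a positive odd integer, and let R = Z/p^r. Then χ(Γ₀(R)) = ω(Γ₀(R)) = p^{(r-1)/2} + 1. -/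
/-! In `R = ℤ/p^(2k+1)`, `xy = 0` forces `p^(k+1)` to divide `x` or `y`, so the ideal
`M = p^(k+1) R`, which has `p^k` elements, covers every edge of `Γ₀(R)`. Giving the elements
of `M` distinct colours and everything else one extra colour is then a proper colouring
with `p^k + 1` colours. Conversely `M ∪ {p^k}` is a clique, because `M · M = 0` and
`p^k · M = 0`. Hence `p^k + 1 ≤ ω ≤ χ ≤ p^k + 1`. -/

open Finset

namespace SimpleGraph

variable {V : Type*} {G : SimpleGraph V}

theorem IsVertexCover.colorable_card_add_one {s : Finset V} (hs : G.IsVertexCover s) :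
    G.Colorable (#s + 1) := by
  classical
  let C : G.Coloring (Option s) := Coloring.mk
    (fun v => if h : v ∈ s then some ⟨v, h⟩ else none) fun {v w} hvw hC => by
      rcases hs hvw with (hv : v ∈ s) | (hw : w ∈ s)
      · by_cases hw : w ∈ s <;> simp [hv, hw, hvw.ne] at hC
      · by_cases hv : v ∈ s <;> simp [hv, hw, hvw.ne] at hC
  simpa using C.colorable

theorem chromaticNumber_eq_cliqueNumE_of_isClique_of_colorable {s : Finset V}
    (hs : G.IsClique (s : Set V)) (hG : G.Colorable #s) :
    G.chromaticNumber = cliqueNumE G ∧ cliqueNumE G = #s := by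
  have hle : cliqueNumE G ≤ G.chromaticNumber :=
    iSup₂_le fun t ht => ht.card_le_chromaticNumber
  have hge : (#s : ℕ∞) ≤ cliqueNumE G :=
    le_iSup₂ (f := fun (t : Finset V) (_ : G.IsClique (t : Set V)) => (#t : ℕ∞)) s hs
  have hχ := hG.chromaticNumber_le
  exact ⟨le_antisymm (hχ.trans hge) hle, le_antisymm (hle.trans hχ) hge⟩

end SimpleGraph

theorem Prime.pow_succ_dvd_or_pow_succ_dvd_of_pow_dvd_mul {α : Type*} [CommMonoidWithZero α]
    [IsCancelMulZero α] {p x y : α} (hp : Prime p) {a b : ℕ} (h : p ^ (a + b + 1) ∣ x * y) :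
    p ^ (a + 1) ∣ x ∨ p ^ (b + 1) ∣ y := by
  simp only [pow_dvd_iff_le_emultiplicity, emultiplicity_mul hp] at h ⊢
  by_contra! hxy
  have hx := Order.le_of_lt_add_one (by simpa using hxy.1)
  have hy := Order.le_of_lt_add_one (by simpa using hxy.2)
  have := h.trans (add_le_add hx hy)
  norm_cast at this
  omega

namespace ZMod

theorem mul_eq_zero_iff_dvd_val_mul_val {n : ℕ} {x y : ZMod n} :
    x * y = 0 ↔ n ∣ x.val * y.val := by
  rw [← val_eq_zero, val_mul, Nat.dvd_iff_mod_eq_zero]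

theorem mul_eq_zero_of_dvd_val {n a b : ℕ} {x y : ZMod n} (hn : n ∣ a * b) (hx : a ∣ x.val)
    (hy : b ∣ y.val) : x * y = 0 :=
  mul_eq_zero_iff_dvd_val_mul_val.mpr (hn.trans (mul_dvd_mul hx hy))

def valMultiples (n d : ℕ) [NeZero n] : Finset (ZMod n) := {x | d ∣ x.val}

variable {n d : ℕ} [NeZero n]

@[simp]
theorem mem_valMultiples {x : ZMod n} : x ∈ valMultiples n d ↔ d ∣ x.val := by
  simp [valMultiples]

theorem card_valMultiples (hd : d ∣ n) : #(valMultiples n d) = n / d := by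
  obtain ⟨m, rfl⟩ := hd
  have hd0 : 0 < d := Nat.pos_of_ne_zero (left_ne_zero_of_mul (NeZero.ne (d * m)))
  have hval {i : ℕ} (hi : i ∈ range m) : ((d * i : ℕ) : ZMod (d * m)).val = d * i :=
    val_natCast_of_lt (Nat.mul_lt_mul_of_pos_left (mem_range.mp hi) hd0)
  rw [Nat.mul_div_cancel_left m hd0]
  refine (card_nbij' (fun i => ((d * i : ℕ) : ZMod (d * m))) (fun x => x.val / d)
    ?_ ?_ ?_ ?_).symm.trans (card_range m)
  · intro i hi
    simp only [mem_coe, mem_valMultiples, hval hi, dvd_mul_right]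
  · intro x _
    simpa [Nat.div_lt_iff_lt_mul hd0, mul_comm] using x.val_lt
  · intro i hi
    simp only [hval hi, Nat.mul_div_cancel_left i hd0]
  · intro x hx
    simp only [Nat.mul_div_cancel' (mem_valMultiples.mp hx), natCast_zmod_val]

end ZMod

section PrimePower

open ZMod

variable {p k : ℕ} [Fact p.Prime]

local notation "R" => ZMod (p ^ (2 * k + 1))

theorem card_valMultiples_pow_succ : #(valMultiples (p ^ (2 * k + 1)) (p ^ (k + 1))) = p ^ k := by
  rw [card_valMultiples (pow_dvd_pow p (by omega)), Nat.pow_div (by omega) (Fact.out : p.Prime).pos]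
  congr 1
  omega

theorem isVertexCover_gammaZero_valMultiples :
    (gammaZero R).IsVertexCover (valMultiples (p ^ (2 * k + 1)) (p ^ (k + 1))) :=
  fun x y hxy => by
    simpa using (Fact.out : p.Prime).prime.pow_succ_dvd_or_pow_succ_dvd_of_pow_dvd_mul
      (a := k) (b := k) (by rw [← two_mul]; exact mul_eq_zero_iff_dvd_val_mul_val.mp hxy.2)

theorem val_natCast_pow_eq : ((p ^ k : ℕ) : R).val = p ^ k :=
  val_natCast_of_lt (Nat.pow_lt_pow_right (Fact.out : p.Prime).one_lt (by omega))

theorem natCast_pow_notMem_valMultiples :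
    ((p ^ k : ℕ) : R) ∉ valMultiples (p ^ (2 * k + 1)) (p ^ (k + 1)) := by
  rw [mem_valMultiples, val_natCast_pow_eq,
    Nat.pow_dvd_pow_iff_le_right (Fact.out : p.Prime).one_lt]
  omega

theorem isClique_gammaZero_insert_valMultiples :
    (gammaZero R).IsClique
      ((insert ((p ^ k : ℕ) : R) (valMultiples (p ^ (2 * k + 1)) (p ^ (k + 1))) : Finset R) :
        Set R) := by
  rw [coe_insert, SimpleGraph.isClique_insert]
  refine ⟨fun x hx y hy hxy => ⟨hxy, ?_⟩, fun y hy hxy => ⟨hxy, ?_⟩⟩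
  · refine mul_eq_zero_of_dvd_val ?_ (mem_valMultiples.mp hx) (mem_valMultiples.mp hy)
    rw [← pow_add]
    exact pow_dvd_pow p (by omega)
  · refine mul_eq_zero_of_dvd_val ?_ val_natCast_pow_eq.symm.dvd (mem_valMultiples.mp hy)
    rw [← pow_add]
    exact pow_dvd_pow p (by omega)

end PrimePower

theorem stmt1_general (p r : ℕ) (hp : p.Prime) (hro : Odd r) :
    (gammaZero (ZMod (p ^ r))).chromaticNumber = cliqueNumE (gammaZero (ZMod (p ^ r))) ∧
    cliqueNumE (gammaZero (ZMod (p ^ r))) = ((p ^ ((r - 1) / 2) + 1 : ℕ) : ℕ∞) := by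
  have := Fact.mk hp
  obtain ⟨k, rfl⟩ := hro
  have hnotMem := natCast_pow_notMem_valMultiples (p := p) (k := k)
  have hcard := card_insert_of_notMem hnotMem
  rw [card_valMultiples_pow_succ] at hcard
  rw [show (2 * k + 1 - 1) / 2 = k by omega, ← hcard]
  refine SimpleGraph.chromaticNumber_eq_cliqueNumE_of_isClique_of_colorable
    isClique_gammaZero_insert_valMultiples ?_
  rw [card_insert_of_notMem hnotMem]
  exact isVertexCover_gammaZero_valMultiples.colorable_card_add_one

theorem stmt1 (p r : ℕ) (hp : p.Prime) (hr : 0 < r) (hro : Odd r) :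
    (gammaZero (ZMod (p ^ r))).chromaticNumber = cliqueNumE (gammaZero (ZMod (p ^ r))) ∧
    cliqueNumE (gammaZero (ZMod (p ^ r))) = ((p ^ ((r - 1) / 2) + 1 : ℕ) : ℕ∞) :=
  stmt1_general p r hp hro
end

section
/- Let R₁ and R₂ be commutative rings with 1 and R = R₁ × R₂. Then χ(Γ₀(R)) ≥ χ(Γ₀(R₁)) + χ(Γ₀(R₂)) − 1. -/
namespace SimpleGraph

variable {V V₁ V₂ α : Type*} {G : SimpleGraph V} {G₁ : SimpleGraph V₁} {G₂ : SimpleGraph V₂}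

theorem Coloring.chromaticNumber_le_encard_range (C : G.Coloring α) :
    G.chromaticNumber ≤ (Set.range C).encard := by
  rcases (Set.range C).finite_or_infinite with hfin | hinf
  · have := hfin.fintype
    let C' : G.Coloring (Set.range C) :=
      Coloring.mk (Set.rangeFactorization C) fun h heq => C.valid h (congrArg Subtype.val heq)
    calc G.chromaticNumber ≤ Fintype.card (Set.range C) := C'.colorable.chromaticNumber_le
      _ = (Set.range C).encard := by rw [Set.encard, ENat.card_eq_coe_fintype_card]
  · simp [hinf.encard_eq]

theorem chromaticNumber_add_chromaticNumber_le_of_hom (f₁ : G₁ →g G) (f₂ : G₂ →g G)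
    (hadj : ∀ a b, f₁ a ≠ f₂ b → G.Adj (f₁ a) (f₂ b))
    (hmeet : (Set.range f₁ ∩ Set.range f₂).Subsingleton) :
    G₁.chromaticNumber + G₂.chromaticNumber ≤ G.chromaticNumber + 1 := by
  rcases eq_or_ne G.chromaticNumber ⊤ with htop | htop
  · simp [htop]
  obtain ⟨C⟩ := colorable_of_chromaticNumber_ne_top htop
  set S₁ := Set.range (C ∘ f₁)
  set S₂ := Set.range (C ∘ f₂)
  have hshared : ∀ a b, C (f₁ a) = C (f₂ b) → f₁ a = f₂ b := fun a b hC =>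
    not_not.mp fun hne => C.valid (hadj a b hne) hC
  have hinter : (S₁ ∩ S₂).encard ≤ 1 := by
    rw [Set.encard_le_one_iff]
    rintro _ _ ⟨⟨a, rfl⟩, ⟨b, hb⟩⟩ ⟨⟨a', rfl⟩, ⟨b', hb'⟩⟩
    have hab := hshared a b hb.symm
    have hab' := hshared a' b' hb'.symm
    exact congrArg C (hmeet ⟨⟨a, rfl⟩, ⟨b, hab.symm⟩⟩ ⟨⟨a', rfl⟩, ⟨b', hab'.symm⟩⟩)
  have hunion : (S₁ ∪ S₂).encard ≤ G.chromaticNumber := by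
    calc (S₁ ∪ S₂).encard ≤ (Set.univ : Set (Fin _)).encard := Set.encard_le_encard (by simp)
      _ = G.chromaticNumber := by simp [ENat.natCast_toNat htop]
  calc G₁.chromaticNumber + G₂.chromaticNumber ≤ S₁.encard + S₂.encard :=
        add_le_add (Coloring.chromaticNumber_le_encard_range (C.comap f₁))
          (Coloring.chromaticNumber_le_encard_range (C.comap f₂))
    _ = (S₁ ∪ S₂).encard + (S₁ ∩ S₂).encard := (Set.encard_union_add_encard_inter S₁ S₂).symm
    _ ≤ G.chromaticNumber + 1 := add_le_add hunion hinter

end SimpleGraph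

namespace gammaZero

variable (R₁ R₂ : Type*) [CommRing R₁] [CommRing R₂]

@[simps]
def inlHom : gammaZero R₁ →g gammaZero (R₁ × R₂) where
  toFun x := (x, 0)
  map_rel' h := ⟨by simpa using h.1, by simp [h.2]⟩

@[simps]
def inrHom : gammaZero R₂ →g gammaZero (R₁ × R₂) where
  toFun y := (0, y)
  map_rel' h := ⟨by simpa using h.1, by simp [h.2]⟩

theorem adj_inlHom_inrHom {x : R₁} {y : R₂} (hne : inlHom R₁ R₂ x ≠ inrHom R₁ R₂ y) :
    (gammaZero (R₁ × R₂)).Adj (inlHom R₁ R₂ x) (inrHom R₁ R₂ y) :=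
  ⟨hne, by simp⟩

theorem range_inlHom_inter_range_inrHom :
    Set.range (inlHom R₁ R₂) ∩ Set.range (inrHom R₁ R₂) ⊆ {0} := by
  rintro _ ⟨⟨x, rfl⟩, ⟨y, hy⟩⟩
  simp_all [Prod.ext_iff]

end gammaZero

theorem stmt5 (R₁ R₂ : Type*) [CommRing R₁] [CommRing R₂] :
    (gammaZero (R₁ × R₂)).chromaticNumber ≥
      (gammaZero R₁).chromaticNumber + (gammaZero R₂).chromaticNumber - 1 :=
  tsub_le_iff_right.mpr <|
    SimpleGraph.chromaticNumber_add_chromaticNumber_le_of_hom _ _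
      (fun _ _ => gammaZero.adj_inlHom_inrHom R₁ R₂)
      (Set.subsingleton_of_subset_singleton (gammaZero.range_inlHom_inter_range_inrHom R₁ R₂))
end

section
/- Let R₂ be a reduced commutative ring with 1 and let T be an independent set of Γ₀(R₂) with 0 ∉ T. Then for any commutative ring R₁ with 1, the set R₁ × T is an independent set of Γ₀(R₁ × R₂). -/
/-- Independence says nothing about `x * x`, since `Γ₀` has no loops; reducedness together
with `0 ∉ T` covers that case. -/
theorem mul_ne_zero_of_gammaZero_independent {R : Type*} [CommRing R] [IsReduced R] {T : Set R}
    (hT : ∀ x ∈ T, ∀ y ∈ T, ¬ (gammaZero R).Adj x y) (h0 : (0 : R) ∉ T)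
    {x y : R} (hx : x ∈ T) (hy : y ∈ T) : x * y ≠ 0 := by
  intro hxy
  obtain rfl | hne := eq_or_ne x y
  · exact h0 (eq_zero_of_pow_eq_zero (x := x) (n := 2) (by rwa [sq]) ▸ hx)
  · exact hT x hx y hy ⟨hne, hxy⟩

theorem gammaZero_prod_not_adj_of_snd_mul_ne_zero {R₁ R₂ : Type*} [CommRing R₁] [CommRing R₂]
    {x y : R₁ × R₂} (h : x.2 * y.2 ≠ 0) : ¬ (gammaZero (R₁ × R₂)).Adj x y :=
  fun hadj => h (congrArg Prod.snd hadj.2)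

theorem stmt7 (R₁ R₂ : Type*) [CommRing R₁] [CommRing R₂] (hred : IsReduced R₂)
    (T : Set R₂) (hT : ∀ x ∈ T, ∀ y ∈ T, ¬ (gammaZero R₂).Adj x y) (h0 : (0 : R₂) ∉ T) :
    ∀ x ∈ (Set.univ : Set R₁) ×ˢ T, ∀ y ∈ (Set.univ : Set R₁) ×ˢ T,
      ¬ (gammaZero (R₁ × R₂)).Adj x y := by
  rintro x ⟨-, hx⟩ y ⟨-, hy⟩
  exact gammaZero_prod_not_adj_of_snd_mul_ne_zero
    (mul_ne_zero_of_gammaZero_independent hT h0 hx hy)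
end

section
/- Let R₁ and R₂ be commutative rings with 1 and R = R₁ × R₂. Then ω(Γ₀(R)) ≥ ω(Γ₀(R₁)) + ω(Γ₀(R₂)) − 1. -/
/-!
Cliques `S₁` of `Γ₀(R₁)` and `S₂` of `Γ₀(R₂)` give the clique `S₁ × {0} ∪ {0} × S₂` of
`Γ₀(R₁ × R₂)`, since `(x, 0) * (0, y) = 0`; the two pieces meet at most in `(0, 0)`.
-/

open Finset

lemma le_cliqueNumE {V : Type*} {G : SimpleGraph V} {s : Finset V} (hs : G.IsClique (s : Set V)) :
    (#s : ℕ∞) ≤ cliqueNumE G :=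
  le_iSup₂_of_le s hs le_rfl

lemma cliqueNumE_add_cliqueNumE_le {V₁ V₂ V : Type*} {G₁ : SimpleGraph V₁} {G₂ : SimpleGraph V₂}
    {G : SimpleGraph V}
    (h : ∀ s₁ : Finset V₁, G₁.IsClique (s₁ : Set V₁) →
      ∀ s₂ : Finset V₂, G₂.IsClique (s₂ : Set V₂) →
        ∃ t : Finset V, G.IsClique (t : Set V) ∧ #s₁ + #s₂ ≤ #t + 1) :
    cliqueNumE G₁ + cliqueNumE G₂ ≤ cliqueNumE G + 1 :=
  ENat.biSup_add_biSup_le' ⟨∅, by simp⟩ ⟨∅, by simp⟩ fun s₁ h₁ s₂ h₂ => by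
    obtain ⟨t, ht, hcard⟩ := h s₁ h₁ s₂ h₂
    calc (#s₁ : ℕ∞) + #s₂ ≤ #t + 1 := by exact_mod_cast hcard
      _ ≤ cliqueNumE G + 1 := by gcongr; exact le_cliqueNumE ht

lemma Finset.card_add_card_le_card_product_singleton_union {α β : Type*} [DecidableEq α]
    [DecidableEq β] (s : Finset α) (t : Finset β) (a : α) (b : β) :
    #s + #t ≤ #(s ×ˢ {b} ∪ {a} ×ˢ t) + 1 := by
  have hinter : #((s ×ˢ {b}) ∩ ({a} ×ˢ t)) ≤ 1 := by
    rw [product_inter_product, card_product]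
    exact Nat.mul_le_mul ((card_le_card inter_subset_right).trans_eq (card_singleton a))
      ((card_le_card inter_subset_left).trans_eq (card_singleton b))
  have := card_union_add_card_inter (s ×ˢ {b}) ({a} ×ˢ t)
  simp only [card_product, card_singleton, mul_one, one_mul] at this
  omega

namespace gammaZero

variable {R₁ R₂ : Type*} [CommRing R₁] [CommRing R₂]

lemma isClique_prod_zero_union_zero_prod {s : Set R₁} {t : Set R₂}
    (hs : (gammaZero R₁).IsClique s) (ht : (gammaZero R₂).IsClique t) :
    (gammaZero (R₁ × R₂)).IsClique (s ×ˢ {0} ∪ {0} ×ˢ t) := by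
  rw [SimpleGraph.IsClique, Set.pairwise_union]
  refine ⟨?_, ?_, ?_⟩
  · rintro ⟨x, _⟩ ⟨hx, rfl⟩ ⟨x', _⟩ ⟨hx', rfl⟩ hne
    exact ⟨hne, Prod.ext (hs hx hx' (by simpa using hne)).2 (mul_zero 0)⟩
  · rintro ⟨_, y⟩ ⟨rfl, hy⟩ ⟨_, y'⟩ ⟨rfl, hy'⟩ hne
    exact ⟨hne, Prod.ext (mul_zero 0) (ht hy hy' (by simpa using hne)).2⟩
  · rintro ⟨x, _⟩ ⟨-, rfl⟩ ⟨_, y⟩ ⟨rfl, -⟩ hne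
    have hadj : (gammaZero (R₁ × R₂)).Adj (x, 0) (0, y) :=
      ⟨hne, Prod.ext (mul_zero x) (zero_mul y)⟩
    exact ⟨hadj, hadj.symm⟩

end gammaZero

theorem stmt8 (R₁ R₂ : Type*) [CommRing R₁] [CommRing R₂] :
    cliqueNumE (gammaZero (R₁ × R₂)) ≥
      cliqueNumE (gammaZero R₁) + cliqueNumE (gammaZero R₂) - 1 := by
  classical
  refine tsub_le_iff_right.mpr (cliqueNumE_add_cliqueNumE_le fun s₁ h₁ s₂ h₂ => ?_)
  refine ⟨s₁ ×ˢ {0} ∪ {0} ×ˢ s₂, ?_, card_add_card_le_card_product_singleton_union s₁ s₂ 0 0⟩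
  simpa only [coe_union, coe_product, coe_singleton] using
    gammaZero.isClique_prod_zero_union_zero_prod h₁ h₂
end

section
/- Let R₁ and R₂ be commutative rings with 1 such that R₂ is reduced (has no nonzero nilpotent elements), and let R = R₁ × R₂. Then ω(Γ₀(R)) = ω(Γ₀(R₁)) + ω(Γ₀(R₂)) − 1. -/
open Finset

section CliqueNum

variable {V W : Type*} {G : SimpleGraph V} {H : SimpleGraph W}

lemma card_le_cliqueNumE {s : Finset V} (hs : G.IsClique (s : Set V)) :
    (#s : ℕ∞) ≤ cliqueNumE G :=
  le_iSup₂ (f := fun (s : Finset V) (_ : G.IsClique (s : Set V)) => (#s : ℕ∞)) s hs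

lemma cliqueNumE_le {n : ℕ∞} (h : ∀ s : Finset V, G.IsClique (s : Set V) → (#s : ℕ∞) ≤ n) :
    cliqueNumE G ≤ n :=
  iSup₂_le h

lemma cliqueNumE_add_cliqueNumE_le_s9 {n : ℕ∞}
    (h : ∀ (s : Finset V) (t : Finset W), G.IsClique (s : Set V) → H.IsClique (t : Set W) →
      (#s + #t : ℕ∞) ≤ n) :
    cliqueNumE G + cliqueNumE H ≤ n :=
  ENat.biSup_add_biSup_le' ⟨∅, by simp⟩ ⟨∅, by simp⟩ fun s hs t ht => h s t hs ht

end CliqueNum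

section ZeroDivisorGraph

variable {R S : Type*} [CommRing R] [CommRing S]

lemma isClique_gammaZero_image {f : R → S} (hf : ∀ x y, x * y = 0 → f x * f y = 0)
    {s : Set R} (hs : (gammaZero R).IsClique s) : (gammaZero S).IsClique (f '' s) := by
  rintro _ ⟨x, hx, rfl⟩ _ ⟨y, hy, rfl⟩ hxy
  exact ⟨hxy, hf x y (hs hx hy (ne_of_apply_ne f hxy)).2⟩

lemma isClique_gammaZero_insert_zero {s : Set R} (hs : (gammaZero R).IsClique s) :
    (gammaZero R).IsClique (insert 0 s) :=
  hs.insert fun b _ hb => ⟨hb, zero_mul b⟩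

lemma injOn_of_isClique_gammaZero [IsReduced S] {f : R → S}
    (hf : ∀ x y, x * y = 0 → f x * f y = 0) {s : Set R} (hs : (gammaZero R).IsClique s) :
    Set.InjOn f {x ∈ s | f x ≠ 0} := by
  rintro x ⟨hx, hfx⟩ y ⟨hy, -⟩ hxy
  by_contra hne
  have hsq : f x ^ 2 = 0 := by rw [sq]; nth_rw 2 [hxy]; exact hf x y (hs hx hy hne).2
  exact hfx (IsReduced.eq_zero _ ⟨2, hsq⟩)

lemma exists_isClique_gammaZero_of_isClique_prod [IsReduced S] {u : Finset (R × S)}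
    (hu : (gammaZero (R × S)).IsClique (u : Set (R × S))) :
    ∃ (s : Finset R) (t : Finset S), (gammaZero R).IsClique (s : Set R) ∧
      (gammaZero S).IsClique (t : Set S) ∧ #u + 1 = #s + #t := by
  classical
  set A := u.filter fun p => p.2 = 0
  set B := u.filter fun p => ¬p.2 = 0
  have hfst (x y : R × S) (h : x * y = 0) : x.1 * y.1 = 0 := congrArg Prod.fst h
  have hsnd (x y : R × S) (h : x * y = 0) : x.2 * y.2 = 0 := congrArg Prod.snd h
  refine ⟨A.image Prod.fst, insert 0 (B.image Prod.snd), ?_, ?_, ?_⟩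
  · rw [coe_image]
    exact isClique_gammaZero_image hfst (hu.subset (filter_subset _ _))
  · rw [coe_insert, coe_image]
    exact isClique_gammaZero_insert_zero
      (isClique_gammaZero_image hsnd (hu.subset (filter_subset _ _)))
  · have hA : #(A.image Prod.fst) = #A := card_image_of_injOn fun x hx y hy h =>
      Prod.ext h ((mem_filter.1 hx).2.trans (mem_filter.1 hy).2.symm)
    have hB : #(B.image Prod.snd) = #B := card_image_of_injOn <|
      (injOn_of_isClique_gammaZero hsnd hu).mono fun x hx => mem_filter.1 hx
    have h0 : (0 : S) ∉ B.image Prod.snd := by simp [B]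
    rw [card_insert_of_notMem h0, hA, hB, ← add_assoc, card_filter_add_card_filter_not]

lemma exists_isClique_gammaZero_prod {s : Finset R} {t : Finset S}
    (hs : (gammaZero R).IsClique (s : Set R)) (ht : (gammaZero S).IsClique (t : Set S)) :
    ∃ u : Finset (R × S), (gammaZero (R × S)).IsClique (u : Set (R × S)) ∧
      #s + #t ≤ #u + 1 := by
  classical
  set A := s.image fun a => (a, (0 : S))
  set B := t.image fun b => ((0 : R), b)
  refine ⟨A ∪ B, ?_, ?_⟩
  · rw [coe_union, coe_image, coe_image]
    refine Set.pairwise_union.2 ⟨isClique_gammaZero_image (fun x y h => by simp [h]) hs,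
      isClique_gammaZero_image (fun x y h => by simp [h]) ht, ?_⟩
    rintro _ ⟨a, -, rfl⟩ _ ⟨b, -, rfl⟩ hab
    exact ⟨⟨hab, by simp⟩, ⟨hab.symm, by simp⟩⟩
  · have hinter : #(A ∩ B) ≤ 1 := card_le_one.2 fun x hx y hy => by
      simp only [A, B, mem_inter, mem_image] at hx hy
      obtain ⟨⟨a, -, rfl⟩, ⟨b, -, hb⟩⟩ := hx
      obtain ⟨⟨c, -, rfl⟩, ⟨d, -, hd⟩⟩ := hy
      simp_all
    have hunion := card_union_add_card_inter A B
    rw [card_image_of_injective _ fun a b h => congrArg Prod.fst h,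
      card_image_of_injective _ fun a b h => congrArg Prod.snd h] at hunion
    omega

end ZeroDivisorGraph

theorem stmt9 (R₁ R₂ : Type*) [CommRing R₁] [CommRing R₂] (hred : IsReduced R₂) :
    cliqueNumE (gammaZero (R₁ × R₂)) =
      cliqueNumE (gammaZero R₁) + cliqueNumE (gammaZero R₂) - 1 := by
  apply le_antisymm
  · refine cliqueNumE_le fun u hu => ENat.le_sub_of_add_le_right ENat.one_ne_top ?_
    obtain ⟨s, t, hs, ht, hcard⟩ := exists_isClique_gammaZero_of_isClique_prod hu
    calc (#u : ℕ∞) + 1 = #s + #t := by exact_mod_cast hcard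
      _ ≤ _ := add_le_add (card_le_cliqueNumE hs) (card_le_cliqueNumE ht)
  · refine tsub_le_iff_right.2 (cliqueNumE_add_cliqueNumE_le_s9 fun s t hs ht => ?_)
    obtain ⟨u, hu, hcard⟩ := exists_isClique_gammaZero_prod hs ht
    calc (#s + #t : ℕ∞) ≤ #u + 1 := by exact_mod_cast hcard
      _ ≤ _ := by gcongr; exact card_le_cliqueNumE hu
end

section
/- Let R = R₁ × ⋯ × R_k be a finite product of commutative rings with 1, where each R_i satisfies χ(Γ₀(R_i)) < ∞. Suppose that for every i there is a finite subset S_i of R_i such that: (i) S_i is a maximal clique of Γ₀(R_i) (a clique not properly contained in any other clique); (ii) for all a, b ∈ R_i \ S_i (including a = b), ab ≠ 0. Let N_i = {a ∈ S_i : a² = 0}, n_i = |N_i| and s_i = |S_i|. Then χ(Γ₀(R)) = ω(Γ₀(R)) = ∏_{i=1}^k n_i + ∑_{i=1}^k (s_i − n_i). -/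
/-!
By maximality, every `x ∈ Rᵢ` is represented by some `a ∈ Sᵢ`: `x` itself if `x ∈ Sᵢ`, and
otherwise an `a` with `x * a ≠ 0`. Color `x ∈ ∏ Rᵢ` by its tuple of representatives when they
all square to zero, and otherwise by one pair `(i, aᵢ)` with `aᵢ² ≠ 0`. Since elements outside
`Sᵢ` never annihilate each other, vertices of the same color have a coordinate with nonzero
product, so this is a proper coloring with `∏ nᵢ + ∑ (sᵢ - nᵢ)` colors. The colors themselves
span a clique: the tuples in `∏ Nᵢ` together with the `Pi.single i a`, `a ∈ Sᵢ \ Nᵢ`.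
Hence `χ ≤ #colors ≤ ω ≤ χ`.
-/

open SimpleGraph

theorem cliqueNumE_le_chromaticNumber {V : Type*} (G : SimpleGraph V) :
    cliqueNumE G ≤ G.chromaticNumber :=
  iSup₂_le fun _ hs => hs.card_le_chromaticNumber

theorem chromaticNumber_eq_cliqueNumE_of_coloring {V α : Type*} [Finite α] {G : SimpleGraph V}
    (C : G.Coloring α) (e : α → V) (he : Pairwise fun a b => G.Adj (e a) (e b)) :
    G.chromaticNumber = cliqueNumE G ∧ cliqueNumE G = Nat.card α := by
  classical
  have := Fintype.ofFinite α
  have he_inj : e.Injective := fun a b hab => by_contra fun h => (he h).ne hab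
  have hχ : G.chromaticNumber ≤ Nat.card α := by
    rw [Nat.card_eq_fintype_card]
    exact C.colorable.chromaticNumber_le
  have hω : (Nat.card α : ℕ∞) ≤ cliqueNumE G := by
    refine le_iSup₂_of_le (Finset.univ.image e) ?_ ?_
    · simpa [Set.Pairwise] using fun a b hab => he (ne_of_apply_ne e hab)
    · rw [Finset.card_image_of_injective _ he_inj, Finset.card_univ, Nat.card_eq_fintype_card]
  have hωχ := cliqueNumE_le_chromaticNumber G
  exact ⟨le_antisymm (hχ.trans hω) hωχ, le_antisymm (hωχ.trans hχ) hω⟩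

namespace gammaZero

section Ring

variable {R : Type*} [CommRing R] {S : Set R}

theorem exists_mul_ne_zero_of_maximal (hS : Maximal (gammaZero R).IsClique S) {x : R}
    (hx : x ∉ S) : ∃ a ∈ S, x * a ≠ 0 := by
  by_contra! h
  have hins : (gammaZero R).IsClique (insert x S) :=
    isClique_insert.2 ⟨hS.prop, fun a ha hxa => ⟨hxa, h a ha⟩⟩
  exact hx ((hS.eq_of_subset hins (Set.subset_insert x S)) ▸ Set.mem_insert x S)

theorem mul_eq_zero_of_isClique (hS : (gammaZero R).IsClique S) {a b : R} (ha : a ∈ S)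
    (hb : b ∈ S) (h : a ≠ b ∨ a ^ 2 = 0) : a * b = 0 := by
  rcases eq_or_ne a b with rfl | hab
  · simpa [pow_two] using h
  · exact (hS ha hb hab).2

def Represents (S : Set R) (a x : R) : Prop :=
  (x ∈ S → x = a) ∧ (x ∉ S → x * a ≠ 0)

theorem exists_represents_of_maximal (hS : Maximal (gammaZero R).IsClique S) (x : R) :
    ∃ a ∈ S, Represents S a x := by
  by_cases hx : x ∈ S
  · exact ⟨x, hx, fun _ => rfl, fun h => absurd hx h⟩
  · obtain ⟨a, ha, hxa⟩ := exists_mul_ne_zero_of_maximal hS hx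
    exact ⟨a, ha, fun h => absurd h hx, fun _ => hxa⟩

theorem Represents.mul_ne_zero (hout : ∀ x y, x ∉ S → y ∉ S → x * y ≠ 0) {a x y : R}
    (hx : Represents S a x) (hy : Represents S a y) (h : x ∈ S → y ∈ S → a ^ 2 ≠ 0) :
    x * y ≠ 0 := by
  by_cases hxS : x ∈ S <;> by_cases hyS : y ∈ S
  · rw [hx.1 hxS, hy.1 hyS, ← pow_two]
    exact h hxS hyS
  · rw [hx.1 hxS, mul_comm]
    exact hy.2 hyS
  · rw [hy.1 hyS]
    exact hx.2 hxS
  · exact hout x y hxS hyS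

end Ring

def sqZeroPart {R : Type*} [CommRing R] (S : Set R) : Set R := {a ∈ S | a ^ 2 = 0}

def sqNonzeroPart {R : Type*} [CommRing R] (S : Set R) : Set R := {a ∈ S | a ^ 2 ≠ 0}

instance {R : Type*} [CommRing R] {S : Set R} [Finite S] : Finite (sqZeroPart S) :=
  Finite.Set.subset S (Set.sep_subset S _)

instance {R : Type*} [CommRing R] {S : Set R} [Finite S] : Finite (sqNonzeroPart S) :=
  Finite.Set.subset S (Set.sep_subset S _)

theorem ncard_sqNonzeroPart {R : Type*} [CommRing R] {S : Set R} [Finite S] :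
    (sqNonzeroPart S).ncard = S.ncard - (sqZeroPart S).ncard := by
  have : sqNonzeroPart S = S \ sqZeroPart S := by
    ext a
    simp only [sqNonzeroPart, sqZeroPart, Set.mem_sdiff, Set.mem_ofPred_eq]
    tauto
  rw [this, Set.ncard_sdiff (show sqZeroPart S ⊆ S from Set.sep_subset S _)]

section Product

variable {ι : Type*} {R : ι → Type*} [∀ i, CommRing (R i)] {S : ∀ i, Set (R i)}

abbrev Color (S : ∀ i, Set (R i)) : Type _ :=
  (∀ i, sqZeroPart (S i)) ⊕ (Σ i, sqNonzeroPart (S i))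

def Color.Admits : Color S → (∀ i, R i) → Prop
  | .inl z, x => ∀ i, Represents (S i) (z i) (x i)
  | .inr ⟨i, a⟩, x => Represents (S i) a (x i)

theorem exists_color_admits (hS : ∀ i, Maximal (gammaZero (R i)).IsClique (S i))
    (x : ∀ i, R i) : ∃ c : Color S, c.Admits x := by
  choose a haS hax using fun i => exists_represents_of_maximal (hS i) (x i)
  by_cases h : ∃ i, a i ^ 2 ≠ 0
  · obtain ⟨i, hi⟩ := h
    exact ⟨.inr ⟨i, a i, haS i, hi⟩, hax i⟩
  · push Not at h
    exact ⟨.inl fun i => ⟨a i, haS i, h i⟩, hax⟩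

theorem Color.Admits.exists_mul_ne_zero (hout : ∀ i, ∀ x y : R i, x ∉ S i → y ∉ S i → x * y ≠ 0)
    {c : Color S} {x y : ∀ i, R i} (hx : c.Admits x) (hy : c.Admits y) (hxy : x ≠ y) :
    ∃ i, x i * y i ≠ 0 := by
  match c, hx, hy with
  | .inl z, hx, hy =>
    obtain ⟨i, hi⟩ := Function.ne_iff.1 hxy
    exact ⟨i, (hx i).mul_ne_zero (hout i) (hy i) fun hxS hyS =>
      absurd (((hx i).1 hxS).trans ((hy i).1 hyS).symm) hi⟩
  | .inr ⟨i, a⟩, hx, hy => exact ⟨i, hx.mul_ne_zero (hout i) hy fun _ _ => a.2.2⟩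

noncomputable def Color.coloring (hS : ∀ i, Maximal (gammaZero (R i)).IsClique (S i))
    (hout : ∀ i, ∀ x y : R i, x ∉ S i → y ∉ S i → x * y ≠ 0) :
    (gammaZero (∀ i, R i)).Coloring (Color S) :=
  Coloring.mk (fun x => (exists_color_admits hS x).choose) fun {x y} ⟨hxy, hmul⟩ hc => by
    obtain ⟨i, hi⟩ := (exists_color_admits hS x).choose_spec.exists_mul_ne_zero hout
      (hc ▸ (exists_color_admits hS y).choose_spec) hxy
    exact hi (congrFun hmul i)

theorem Color.nat_card [Fintype ι] [∀ i, Finite (S i)] :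
    Nat.card (Color S) = ∏ i, (sqZeroPart (S i)).ncard + ∑ i, (sqNonzeroPart (S i)).ncard := by
  rw [Nat.card_sum, Nat.card_pi, Nat.card_sigma]
  rfl

variable [DecidableEq ι]

def Color.toVertex : Color S → ∀ i, R i
  | .inl z => fun i => z i
  | .inr ⟨i, a⟩ => Pi.single i a

theorem Color.toVertex_injective : (Color.toVertex : Color S → ∀ i, R i).Injective := by
  have hne : ∀ {i} (a : sqNonzeroPart (S i)) {x : R i}, x ^ 2 = 0 → (a : R i) ≠ x :=
    fun a _ hx h => a.2.2 (h ▸ hx)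
  rintro (z | ⟨i, a⟩) (z' | ⟨j, b⟩) h
  · exact congrArg Sum.inl (funext fun i => Subtype.ext (congrFun h i))
  · refine absurd ?_ (hne b (z j).2.2)
    simpa [Color.toVertex] using (congrFun h j).symm
  · refine absurd ?_ (hne a (z' i).2.2)
    simpa [Color.toVertex] using congrFun h i
  · obtain rfl : i = j := by
      by_contra hij
      refine hne a (zero_pow two_ne_zero) ?_
      simpa [Color.toVertex, Pi.single_eq_of_ne hij] using congrFun h i
    obtain rfl : a = b := Subtype.ext (Pi.single_injective i h)
    rfl

theorem Color.toVertex_mul_toVertex (hS : ∀ i, (gammaZero (R i)).IsClique (S i))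
    {c d : Color S} (hcd : c ≠ d) : c.toVertex * d.toVertex = 0 := by
  have hN : ∀ {i} (z : sqZeroPart (S i)) {x : R i}, x ∈ S i → (z : R i) * x = 0 :=
    fun z _ hx => mul_eq_zero_of_isClique (hS _) z.2.1 hx (Or.inr z.2.2)
  funext l
  rcases c with z | ⟨i, a⟩ <;> rcases d with z' | ⟨j, b⟩
  · exact hN (z l) (z' l).2.1
  · rcases eq_or_ne l j with rfl | hlj
    · simpa [Color.toVertex] using hN (z l) b.2.1
    · simp [Color.toVertex, Pi.single_eq_of_ne hlj]
  · rcases eq_or_ne l i with rfl | hli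
    · simpa [Color.toVertex, mul_comm] using hN (z' l) a.2.1
    · simp [Color.toVertex, Pi.single_eq_of_ne hli]
  · rcases eq_or_ne l i with rfl | hli
    · rcases eq_or_ne l j with rfl | hlj
      · have hab : (a : R l) ≠ b := fun h => hcd (by rw [Subtype.ext h])
        simpa [Color.toVertex] using mul_eq_zero_of_isClique (hS l) a.2.1 b.2.1 (Or.inl hab)
      · simp [Color.toVertex, Pi.single_eq_of_ne hlj]
    · simp [Color.toVertex, Pi.single_eq_of_ne hli]

end Product

end gammaZero

open gammaZero in
theorem stmt11_general (k : ℕ) (R : Fin k → Type*) [∀ i, CommRing (R i)]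
    (S : ∀ i, Finset (R i))
    (hclique : ∀ i, (gammaZero (R i)).IsClique ((S i : Set (R i))))
    (hmaxcl : ∀ i, ∀ t : Set (R i), (gammaZero (R i)).IsClique t →
      (S i : Set (R i)) ⊆ t → t = (S i : Set (R i)))
    (hout : ∀ i, ∀ a b : R i, a ∉ S i → b ∉ S i → a * b ≠ 0) :
    (gammaZero (∀ i, R i)).chromaticNumber = cliqueNumE (gammaZero (∀ i, R i)) ∧
    cliqueNumE (gammaZero (∀ i, R i)) =
      ((∏ i, {a ∈ (S i : Set (R i)) | a ^ 2 = 0}.ncard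
        + ∑ i, ((S i).card - {a ∈ (S i : Set (R i)) | a ^ 2 = 0}.ncard) : ℕ) : ℕ∞) := by
  have hmax i : Maximal (gammaZero (R i)).IsClique (S i : Set (R i)) :=
    ⟨hclique i, fun t ht hst => (hmaxcl i t ht hst).le⟩
  obtain ⟨hχω, hω⟩ := chromaticNumber_eq_cliqueNumE_of_coloring (Color.coloring hmax hout)
    Color.toVertex fun c d hcd =>
      ⟨Color.toVertex_injective.ne hcd, Color.toVertex_mul_toVertex hclique hcd⟩
  refine ⟨hχω, hω.trans ?_⟩
  simp only [Color.nat_card, ncard_sqNonzeroPart, Set.ncard_coe_finset]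
  rfl

theorem stmt11 (k : ℕ) (R : Fin k → Type*) [∀ i, CommRing (R i)]
    (hchi : ∀ i, (gammaZero (R i)).chromaticNumber < ⊤)
    (S : ∀ i, Finset (R i))
    (hclique : ∀ i, (gammaZero (R i)).IsClique ((S i : Set (R i))))
    (hmaxcl : ∀ i, ∀ t : Set (R i), (gammaZero (R i)).IsClique t →
      (S i : Set (R i)) ⊆ t → t = (S i : Set (R i)))
    (hout : ∀ i, ∀ a b : R i, a ∉ S i → b ∉ S i → a * b ≠ 0) :
    (gammaZero (∀ i, R i)).chromaticNumber = cliqueNumE (gammaZero (∀ i, R i)) ∧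
    cliqueNumE (gammaZero (∀ i, R i)) =
      ((∏ i, {a ∈ (S i : Set (R i)) | a ^ 2 = 0}.ncard
        + ∑ i, ((S i).card - {a ∈ (S i : Set (R i)) | a ^ 2 = 0}.ncard) : ℕ) : ℕ∞) :=
  stmt11_general k R S hclique hmaxcl hout
end
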